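/- arXiv:0705.0372 — 7 statements merged into one kernel-verified Lean document; each statement's English description precedes it below -/
import Mathlib

section
/- For every γ ∈ (0,1) there exists a constant B > 1 such that for all x > 0, x·U(ln x) + x·U(ln x)² ≤ B(x−1) + ((B−1)/γ)(1−x^γ), where U(t) := min(t,1) is the truncation function. -/
open Real Set

/-!
Substitute `x = exp t`, so that `x ^ γ = exp (γ t)`; both sides vanish at `t = 0`.
With `c = B - 1`, the right-hand side has derivative `exp t * (1 + c (1 - exp (-(1 - γ) t)))`,
the left-hand side `exp t * (t ^ 2 + 3 t + 1)` for `t ≤ 1` and `2 exp t` for `t ≥ 1`.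
Since `1 - exp (-u) ≤ u` always and `u / 2 ≤ 1 - exp (-u)` on `[0, 1]`, taking `c (1 - γ) ≥ 8`
makes the difference of the two sides nonincreasing on `(-∞, 0]` and nondecreasing on `[0, ∞)`.
-/

lemma half_le_one_sub_exp_neg {u : ℝ} (hu₀ : 0 ≤ u) (hu₁ : u ≤ 1) : u / 2 ≤ 1 - exp (-u) := by
  have h : exp (-u) * (1 + u) ≤ 1 := by
    calc exp (-u) * (1 + u) ≤ exp (-u) * exp u := by gcongr; linarith [add_one_le_exp u]
      _ = 1 := by rw [← exp_add, neg_add_cancel, exp_zero]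
  nlinarith [exp_pos (-u), mul_nonneg hu₀ (sub_nonneg.2 hu₁)]

lemma one_sub_exp_neg_le (u : ℝ) : 1 - exp (-u) ≤ u := by
  linarith [add_one_le_exp (-u)]

lemma monotoneOn_sub_of_hasDerivAt_le {f g f' g' : ℝ → ℝ} {s : Set ℝ} (hs : Convex ℝ s)
    (hf : ∀ t, HasDerivAt f (f' t) t) (hg : ∀ t, HasDerivAt g (g' t) t)
    (hle : ∀ t ∈ s, f' t ≤ g' t) : MonotoneOn (g - f) s :=
  monotoneOn_of_hasDerivWithinAt_nonneg hs
    (fun t _ => ((hg t).sub (hf t)).continuousAt.continuousWithinAt)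
    (fun t _ => ((hg t).sub (hf t)).hasDerivWithinAt)
    (fun t ht => sub_nonneg.2 (hle t (interior_subset ht)))

noncomputable def majorant (γ B t : ℝ) : ℝ := B * (exp t - 1) + (B - 1) / γ * (1 - exp (γ * t))

lemma majorant_zero (γ B : ℝ) : majorant γ B 0 = 0 := by
  simp [majorant]

lemma hasDerivAt_majorant {γ : ℝ} (B : ℝ) (hγ : γ ≠ 0) (t : ℝ) :
    HasDerivAt (majorant γ B) (exp t * (1 + (B - 1) * (1 - exp (-((1 - γ) * t))))) t := by
  have h := (((hasDerivAt_exp t).sub_const 1).const_mul B).add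
    (((hasDerivAt_const t (1 : ℝ)).sub ((hasDerivAt_id t).const_mul γ).exp).const_mul
      ((B - 1) / γ))
  have : exp (γ * t) = exp t * exp (-((1 - γ) * t)) := by rw [← exp_add]; ring_nf
  refine h.congr_deriv ?_
  simp only [id_eq, this]
  field_simp
  ring

lemma hasDerivAt_exp_mul_add_sq (t : ℝ) :
    HasDerivAt (fun t => exp t * (t + t ^ 2)) (exp t * (t ^ 2 + 3 * t + 1)) t := by
  refine ((hasDerivAt_exp t).mul
    ((hasDerivAt_id' t).add ((hasDerivAt_id' t).pow 2))).congr_deriv ?_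
  simp only [Pi.add_apply, Pi.pow_apply]
  ring

section

variable {γ B : ℝ}

lemma mul_one_sub_exp_neg_le_of_nonpos (hB : 3 ≤ (B - 1) * (1 - γ)) (hB₁ : 1 ≤ B) {t : ℝ}
    (ht : t ≤ 0) :
    (B - 1) * (1 - exp (-((1 - γ) * t))) ≤ t ^ 2 + 3 * t := by
  have := mul_le_mul_of_nonneg_left (one_sub_exp_neg_le ((1 - γ) * t)) (sub_nonneg.2 hB₁)
  nlinarith

lemma le_mul_one_sub_exp_neg_of_mem_Icc (hγ : γ ∈ Ico 0 1) (hB : 8 ≤ (B - 1) * (1 - γ))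
    {t : ℝ} (ht : t ∈ Icc 0 1) : t ^ 2 + 3 * t ≤ (B - 1) * (1 - exp (-((1 - γ) * t))) := by
  have hu : (1 - γ) * t ∈ Icc 0 1 := ⟨by nlinarith [hγ.2, ht.1], by nlinarith [hγ.1, ht.1, ht.2]⟩
  have hB₁ : 0 ≤ B - 1 := by nlinarith [hγ.2]
  have := mul_le_mul_of_nonneg_left (half_le_one_sub_exp_neg hu.1 hu.2) hB₁
  nlinarith [ht.1, ht.2]

lemma one_le_mul_one_sub_exp_neg_of_one_le (hγ : γ ∈ Ico 0 1) (hB : 8 ≤ (B - 1) * (1 - γ))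
    {t : ℝ} (ht : 1 ≤ t) : 1 ≤ (B - 1) * (1 - exp (-((1 - γ) * t))) := by
  have h₁ := le_mul_one_sub_exp_neg_of_mem_Icc hγ hB (right_mem_Icc.2 zero_le_one)
  have hB₁ : 0 ≤ B - 1 := by nlinarith [hγ.2]
  have : exp (-((1 - γ) * t)) ≤ exp (-((1 - γ) * 1)) := by
    gcongr; nlinarith [hγ.2]
  nlinarith

end

theorem exp_mul_trunc_le_majorant {γ B : ℝ} (hγ : γ ∈ Ioo 0 1) (hB : 8 ≤ (B - 1) * (1 - γ))
    (t : ℝ) : exp t * (min t 1 + min t 1 ^ 2) ≤ majorant γ B t := by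
  have hγ' : γ ∈ Ico 0 1 := Ioo_subset_Ico_self hγ
  have hB₁ : 1 ≤ B := by nlinarith [hγ.2]
  have hM := hasDerivAt_majorant B hγ.1.ne'
  have hL := hasDerivAt_exp_mul_add_sq
  have le_on_Icc : ∀ s ∈ Icc (0 : ℝ) 1, exp s * (s + s ^ 2) ≤ majorant γ B s := by
    intro s hs
    have hmono := monotoneOn_sub_of_hasDerivAt_le (convex_Icc 0 1) hL hM
      (fun r hr => mul_le_mul_of_nonneg_left
        (by linarith [le_mul_one_sub_exp_neg_of_mem_Icc hγ' hB hr]) (exp_pos r).le)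
      (left_mem_Icc.2 zero_le_one) hs hs.1
    simp only [Pi.sub_apply, majorant_zero] at hmono
    linarith
  rcases le_total t 0 with ht | ht
  · have hmono := monotoneOn_sub_of_hasDerivAt_le (convex_Iic 0) hM hL
      (fun r hr => mul_le_mul_of_nonneg_left
        (by linarith [mul_one_sub_exp_neg_le_of_nonpos (γ := γ) (by linarith) hB₁ hr])
        (exp_pos r).le)
      ht self_mem_Iic ht
    simp only [Pi.sub_apply, majorant_zero] at hmono
    rw [min_eq_left (by linarith)]
    linarith
  rcases le_total t 1 with ht₁ | ht₁
  · rw [min_eq_left ht₁]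
    exact le_on_Icc t ⟨ht, ht₁⟩
  · have hmono := monotoneOn_sub_of_hasDerivAt_le (convex_Ici 1)
      (hasDerivAt_exp · |>.const_mul 2) hM
      (fun r hr => by nlinarith [one_le_mul_one_sub_exp_neg_of_one_le hγ' hB hr, exp_pos r])
      self_mem_Ici ht₁ ht₁
    simp only [Pi.sub_apply] at hmono
    rw [min_eq_right ht₁]
    linarith [le_on_Icc 1 (right_mem_Icc.2 zero_le_one)]

theorem stmt_0 (γ : ℝ) (hγ : γ ∈ Set.Ioo (0:ℝ) 1) :
    ∃ B : ℝ, 1 < B ∧ ∀ x : ℝ, 0 < x →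
      x * min (Real.log x) 1 + x * (min (Real.log x) 1) ^ 2 ≤
        B * (x - 1) + ((B - 1) / γ) * (1 - x ^ γ) := by
  have hγ₁ : 0 < 1 - γ := sub_pos.2 hγ.2
  refine ⟨1 + 8 / (1 - γ), by linarith [div_pos (by norm_num : (0 : ℝ) < 8) hγ₁], ?_⟩
  intro x hx
  have key := exp_mul_trunc_le_majorant (B := 1 + 8 / (1 - γ)) hγ
    (by rw [add_sub_cancel_left, div_mul_cancel₀ _ hγ₁.ne']) (log x)
  rw [exp_log hx, majorant, exp_log hx, mul_comm γ, ← rpow_def_of_pos hx] at key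
  linarith
end

section
/- For every α ∈ (−1,1) and every β > 0, the function x ↦ ((1−α)/2)·β + ((1+α)/2)·x − β^((1−α)/2)·x^((1+α)/2) is decreasing (antitone) on the interval [0, β/e]. -/
/-! With `p = (1 + α) / 2 ∈ (0, 1)` the function is `(1 - p) β + p x - β ^ (1 - p) x ^ p`, the gap in
the weighted AM-GM inequality for `β` and `x`. Its derivative `p (1 - (β / x) ^ (1 - p))` is
nonpositive for `0 < x ≤ β`, so it is antitone on `[0, β] ⊇ [0, β / e]`. -/

open Set Real

noncomputable def amgmGap (p β x : ℝ) : ℝ := (1 - p) * β + p * x - β ^ (1 - p) * x ^ p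

namespace amgmGap

variable {p β : ℝ}

lemma hasDerivAt {x : ℝ} (hx : 0 < x) :
    HasDerivAt (amgmGap p β) (p * (1 - β ^ (1 - p) * x ^ (p - 1))) x := by
  have hpow : HasDerivAt (fun x : ℝ => x ^ p) (p * x ^ (p - 1)) x :=
    hasDerivAt_rpow_const (Or.inl hx.ne')
  exact ((((hasDerivAt_id x).const_mul p).const_add ((1 - p) * β)).sub
    (hpow.const_mul (β ^ (1 - p)))).congr_deriv (by ring)

lemma continuous (hp : 0 ≤ p) : Continuous (amgmGap p β) :=
  (continuous_const.add (continuous_const.mul continuous_id)).sub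
    (continuous_const.mul (continuous_rpow_const hp))

lemma one_le_rpow_mul_rpow (hp : p ≤ 1) {x : ℝ} (hx : 0 < x) (hxβ : x ≤ β) :
    1 ≤ β ^ (1 - p) * x ^ (p - 1) := by
  have hβ : 0 ≤ β := hx.le.trans hxβ
  calc (1 : ℝ) ≤ (β / x) ^ (1 - p) :=
        one_le_rpow ((one_le_div hx).mpr hxβ) (sub_nonneg.mpr hp)
    _ = β ^ (1 - p) * x ^ (p - 1) := by
        rw [div_rpow hβ hx.le, div_eq_mul_inv, ← rpow_neg hx.le, neg_sub]

lemma antitoneOn_Icc (hp₀ : 0 < p) (hp₁ : p ≤ 1) : AntitoneOn (amgmGap p β) (Icc 0 β) := by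
  refine antitoneOn_of_hasDerivWithinAt_nonpos (f' := fun x => p * (1 - β ^ (1 - p) * x ^ (p - 1)))
    (convex_Icc 0 β) (continuous hp₀.le).continuousOn (fun x hx => ?_) fun x hx => ?_ <;>
    rw [interior_Icc] at hx
  · exact (hasDerivAt hx.1).hasDerivWithinAt
  · exact mul_nonpos_of_nonneg_of_nonpos hp₀.le
      (sub_nonpos.mpr (one_le_rpow_mul_rpow hp₁ hx.1 hx.2.le))

end amgmGap

theorem stmt_2 (α β : ℝ) (hα : α ∈ Set.Ioo (-1:ℝ) 1) (hβ : 0 < β) :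
    AntitoneOn (fun x : ℝ =>
        ((1 - α) / 2) * β + ((1 + α) / 2) * x - β ^ ((1 - α) / 2) * x ^ ((1 + α) / 2))
      (Set.Icc 0 (β / Real.exp 1)) := by
  have hq : (1 - α) / 2 = 1 - (1 + α) / 2 := by ring
  have hβe : β / exp 1 ≤ β := div_le_self hβ.le (one_le_exp zero_le_one)
  rw [hq]
  exact (amgmGap.antitoneOn_Icc (by linarith [hα.1]) (by linarith [hα.2])).mono
    (Icc_subset_Icc_right hβe)
end

section
/- For each α ∈ (−1,1) there exists a constant C > 0, depending only on α, such that for any probability measure Q on Ω and any nonnegative measurable densities β¹, β² with ∫β¹dQ = ∫β²dQ = 1, one has P¹{ω : β¹(ω) > e·β²(ω)} ≤ C · D^{(α)}(P¹ ∥ P²), where P¹ is the measure with density β¹ w.r.t. Q, P¹(E) = ∫_E β¹ dQ, and D^{(α)}(P¹∥P²) = (4/(1−α²))(1 − ∫(β¹)^{(1−α)/2}(β²)^{(1+α)/2}dQ). One may take C = ((1−α²)/4)·(((1−α)/2) + ((1+α)/2)e^{−1} − e^{−(1+α)/2})^{−1}. -/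
/-!
Put `s = (1 + α) / 2`, so the Hellinger integrand is `β₁ ^ (1 - s) * β₂ ^ s`. By weighted AM-GM the
gap `(1 - s) β₁ + s β₂ - β₁ ^ (1 - s) β₂ ^ s` is nonnegative and integrates to
`1 - ∫ β₁ ^ (1 - s) β₂ ^ s`. Writing `β₂ = t β₁`, the gap equals `β₁ ((1 - s) + s t - t ^ s)`, and
`t ↦ (1 - s) + s t - t ^ s` is antitone on `[0, 1]`; on `{β₁ > e β₂}` we have `t < e⁻¹`, so there the
gap is at least `κ β₁` with `κ = (1 - s) + s e⁻¹ - e⁻ˢ`, which is positive by strict AM-GM.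
-/

open MeasureTheory Real

lemma monotoneOn_rpow_sub_mul {s : ℝ} (hs0 : 0 ≤ s) (hs1 : s ≤ 1) :
    MonotoneOn (fun x : ℝ => x ^ s - s * x) (Set.Icc 0 1) := by
  rintro t ⟨ht0, -⟩ u ⟨hu0, hu1⟩ htu
  rcases hu0.eq_or_lt with rfl | hu
  · rw [le_antisymm htu ht0]
  have hamgm : (t / u) ^ s * 1 ^ (1 - s) ≤ s * (t / u) + (1 - s) * 1 :=
    geom_mean_le_arith_mean2_weighted hs0 (by linarith) (by positivity) zero_le_one (by ring)
  rw [one_rpow, mul_one, mul_one] at hamgm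
  have hus : u ^ s = u ^ (s - 1) * u := by rw [← rpow_add_one hu.ne', sub_add_cancel]
  have hus1 : 1 ≤ u ^ (s - 1) := one_le_rpow_of_pos_of_le_one_of_nonpos hu hu1 (by linarith)
  have hts : t ^ s ≤ u ^ (s - 1) * (s * t + (1 - s) * u) :=
    calc t ^ s = u ^ s * (t / u) ^ s := by
          rw [div_rpow ht0 hu.le, mul_div_cancel₀ _ (rpow_pos_of_pos hu s).ne']
      _ ≤ u ^ s * (s * (t / u) + (1 - s)) := by gcongr
      _ = u ^ (s - 1) * (s * t + (1 - s) * u) := by rw [hus]; field_simp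
  show t ^ s - s * t ≤ u ^ s - s * u
  nlinarith [mul_nonneg (mul_nonneg hs0 (sub_nonneg.2 hus1)) (sub_nonneg.2 htu)]

lemma mul_le_add_sub_rpow_mul_rpow {s c a b : ℝ} (hs0 : 0 ≤ s) (hs1 : s ≤ 1) (hc1 : c ≤ 1)
    (ha : 0 < a) (hb : 0 ≤ b) (hbc : b ≤ c * a) :
    ((1 - s) + s * c - c ^ s) * a ≤ (1 - s) * a + s * b - a ^ (1 - s) * b ^ s := by
  set t := b / a
  have ht0 : 0 ≤ t := div_nonneg hb ha.le
  have htc : t ≤ c := (div_le_iff₀ ha).2 hbc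
  have hmono := monotoneOn_rpow_sub_mul hs0 hs1 ⟨ht0, htc.trans hc1⟩ ⟨ht0.trans htc, hc1⟩ htc
  have hb_eq : b = a * t := (mul_div_cancel₀ b ha.ne').symm
  have hprod : a ^ (1 - s) * b ^ s = a * t ^ s := by
    rw [hb_eq, mul_rpow ha.le ht0, ← mul_assoc, ← rpow_add ha, sub_add_cancel, rpow_one]
  rw [hprod, hb_eq]
  simp only at hmono
  nlinarith

lemma mul_setIntegral_le_one_sub_integral_rpow_mul_rpow {Ω : Type*} [MeasurableSpace Ω]
    {μ : Measure Ω} {s c : ℝ} {β₁ β₂ : Ω → ℝ} {A : Set Ω} (hs0 : 0 ≤ s) (hs1 : s ≤ 1)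
    (hc1 : c ≤ 1) (hβ₁ : Measurable β₁) (hβ₂ : Measurable β₂) (h₁ : ∀ ω, 0 ≤ β₁ ω)
    (h₂ : ∀ ω, 0 ≤ β₂ ω) (hint₁ : ∫ ω, β₁ ω ∂μ = 1) (hint₂ : ∫ ω, β₂ ω ∂μ = 1)
    (hA : MeasurableSet A) (hA_lt : ∀ ω ∈ A, β₂ ω < c * β₁ ω) :
    ((1 - s) + s * c - c ^ s) * ∫ ω in A, β₁ ω ∂μ ≤
      1 - ∫ ω, β₁ ω ^ (1 - s) * β₂ ω ^ s ∂μ := by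
  have hi₁ : Integrable β₁ μ := .of_integral_ne_zero (by simp [hint₁])
  have hi₂ : Integrable β₂ μ := .of_integral_ne_zero (by simp [hint₂])
  set g : Ω → ℝ := fun ω => β₁ ω ^ (1 - s) * β₂ ω ^ s
  set m : Ω → ℝ := fun ω => (1 - s) * β₁ ω + s * β₂ ω
  have hg_le : ∀ ω, g ω ≤ m ω := fun ω =>
    geom_mean_le_arith_mean2_weighted (by linarith) hs0 (h₁ ω) (h₂ ω) (by ring)
  have hm : Integrable m μ := (hi₁.const_mul _).add (hi₂.const_mul _)
  have hg : Integrable g μ := by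
    refine hm.mono' ((hβ₁.pow_const _).mul (hβ₂.pow_const _)).aestronglyMeasurable
      (ae_of_all _ fun ω => ?_)
    rw [norm_of_nonneg (mul_nonneg (rpow_nonneg (h₁ ω) _) (rpow_nonneg (h₂ ω) _))]
    exact hg_le ω
  have hgap : ∫ ω, (m ω - g ω) ∂μ = 1 - ∫ ω, g ω ∂μ := by
    rw [integral_sub hm hg, integral_add (hi₁.const_mul _) (hi₂.const_mul _),
      integral_const_mul, integral_const_mul, hint₁, hint₂]
    ring
  have hpointwise : ∀ ω ∈ A, ((1 - s) + s * c - c ^ s) * β₁ ω ≤ m ω - g ω := fun ω hω =>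
    have hpos : 0 < β₁ ω := (h₁ ω).lt_of_ne fun h => by
      have := hA_lt ω hω
      rw [← h, mul_zero] at this
      linarith [h₂ ω]
    mul_le_add_sub_rpow_mul_rpow hs0 hs1 hc1 hpos (h₂ ω) (hA_lt ω hω).le
  calc ((1 - s) + s * c - c ^ s) * ∫ ω in A, β₁ ω ∂μ
      = ∫ ω in A, ((1 - s) + s * c - c ^ s) * β₁ ω ∂μ := (integral_const_mul _ _).symm
    _ ≤ ∫ ω in A, (m ω - g ω) ∂μ :=
        setIntegral_mono_on (hi₁.const_mul _).restrict (hm.sub hg).restrict hA hpointwise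
    _ ≤ ∫ ω, (m ω - g ω) ∂μ :=
        setIntegral_le_integral (hm.sub hg) (ae_of_all _ fun ω => sub_nonneg.2 (hg_le ω))
    _ = 1 - ∫ ω, g ω ∂μ := hgap

theorem stmt_12 (α : ℝ) (hα : α ∈ Set.Ioo (-1:ℝ) 1) :
    ∃ C : ℝ, 0 < C ∧
      C = ((1 - α ^ 2) / 4) *
        ((1 - α) / 2 + ((1 + α) / 2) * Real.exp (-1) - Real.exp (-(1 + α) / 2))⁻¹ ∧
      ∀ (Ω : Type) (_ : MeasurableSpace Ω) (Q : Measure Ω), IsProbabilityMeasure Q →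
        ∀ (β₁ β₂ : Ω → ℝ), Measurable β₁ → Measurable β₂ →
          (∀ ω, 0 ≤ β₁ ω) → (∀ ω, 0 ≤ β₂ ω) →
          (∫ ω, β₁ ω ∂Q) = 1 → (∫ ω, β₂ ω ∂Q) = 1 →
          (∫ ω in {ω | β₁ ω > Real.exp 1 * β₂ ω}, β₁ ω ∂Q) ≤
            C * ((4 / (1 - α ^ 2)) *
              (1 - ∫ ω, (β₁ ω) ^ ((1 - α) / 2) * (β₂ ω) ^ ((1 + α) / 2) ∂Q)) := by
  obtain ⟨hα₁, hα₂⟩ := hα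
  set s := (1 + α) / 2
  have hs0 : 0 < s := by simp only [s]; linarith
  have hs1 : s < 1 := by simp only [s]; linarith
  have h1α : (1 - α) / 2 = 1 - s := by simp only [s]; ring
  have hκ_eq : (1 - α) / 2 + s * exp (-1) - exp (-(1 + α) / 2) =
      (1 - s) + s * exp (-1) - exp (-1) ^ s := by
    rw [h1α, ← exp_mul]; simp only [s]; ring_nf
  have hκ : 0 < (1 - s) + s * exp (-1) - exp (-1) ^ s := by
    have := (geom_mean_lt_arith_mean2_weighted_iff_of_pos hs0 (sub_pos.2 hs1) (exp_pos (-1)).le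
      zero_le_one (by ring)).2 (by simp)
    rw [one_rpow, mul_one, mul_one] at this
    linarith
  have hα2 : 0 < 1 - α ^ 2 := by nlinarith
  rw [hκ_eq]
  refine ⟨_, by positivity, rfl, fun Ω _ Q _ β₁ β₂ hβ₁ hβ₂ h₁ h₂ hint₁ hint₂ => ?_⟩
  have hA : MeasurableSet {ω | β₁ ω > exp 1 * β₂ ω} :=
    measurableSet_lt (measurable_const.mul hβ₂) hβ₁
  have hA_lt : ∀ ω ∈ {ω | β₁ ω > exp 1 * β₂ ω}, β₂ ω < exp (-1) * β₁ ω := fun ω hω => by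
    rw [exp_neg, ← div_eq_inv_mul, lt_div_iff₀ (exp_pos 1), mul_comm]
    exact hω
  have key := mul_setIntegral_le_one_sub_integral_rpow_mul_rpow hs0.le hs1.le
    (exp_le_one_iff.2 (by norm_num)) hβ₁ hβ₂ h₁ h₂ hint₁ hint₂ hA hA_lt
  have hC : ∀ x y : ℝ, (1 - α ^ 2) / 4 * x⁻¹ * (4 / (1 - α ^ 2) * y) = x⁻¹ * y := fun x y => by
    field_simp
  rwa [h1α, hC, le_inv_mul_iff₀ hκ]
end

section
/- Let Q be a probability measure, β¹, β² nonnegative measurable densities with ∫β¹dQ = ∫β²dQ = 1, and α ∈ (−1,1) with Hellinger integral H := ∫(β¹)^{(1−α)/2}(β²)^{(1+α)/2}dQ > 0. Define f¹ := (β²/β¹)^{(1+α)/2}/H and f² := (β¹/β²)^{(1−α)/2}/H (with 0/0 := 1). Then ∫f¹·β¹ dQ = 1, ∫f²·β² dQ = 1, and pointwise on {β¹ > 0, β² > 0}, (f¹)^{2/(1+α)}·(f²)^{2/(1−α)} = exp(D^{[α]}), where D^{[α]} := (4/(α²−1))·ln H. -/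
/-!
Multiplying the betting function by its own density turns it into the Hellinger integrand:
`(β²/β¹)^((1+α)/2) · β¹ = (β¹)^((1-α)/2) (β²)^((1+α)/2)`, and symmetrically for `f² β²`,
so both integrals are `H / H = 1`. Where both densities are positive, the powers `2/(1±α)`
undo the exponents, the two ratios cancel, and only `H^(-(2/(1+α) + 2/(1-α))) = H^(4/(α²-1))`
remains.
-/

open MeasureTheory

/-- The condition `c` encodes the convention `0/0 = 1`; the factor `a` kills every value at `a = 0`. -/
lemma ite_div_rpow_mul_self {c : Prop} [Decidable c] {a b p q : ℝ} (hc : c → a = 0)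
    (ha : 0 ≤ a) (hb : 0 ≤ b) (hq : 0 < q) (hpq : p + q = 1) :
    (if c then 1 else b / a) ^ p * a = a ^ q * b ^ p := by
  rcases ha.eq_or_lt with rfl | ha
  · simp [Real.zero_rpow hq.ne']
  · have hsplit : a = a ^ p * a ^ q := by rw [← Real.rpow_add ha, hpq, Real.rpow_one]
    calc (if c then 1 else b / a) ^ p * a = b ^ p / a ^ p * (a ^ p * a ^ q) := by
          rw [if_neg fun h => ha.ne' (hc h), Real.div_rpow hb ha.le, ← hsplit]
      _ = a ^ q * b ^ p := by field_simp [(Real.rpow_pos_of_pos ha p).ne']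

lemma div_rpow_div_rpow_inv_mul {a b p q H : ℝ} (ha : 0 < a) (hb : 0 < b)
    (hp : p ≠ 0) (hq : q ≠ 0) (hH : 0 < H) :
    ((b / a) ^ p / H) ^ p⁻¹ * ((a / b) ^ q / H) ^ q⁻¹ =
      Real.exp (-(p⁻¹ + q⁻¹) * Real.log H) := by
  have hba : 0 ≤ b / a := (div_pos hb ha).le
  have hab : 0 ≤ a / b := (div_pos ha hb).le
  rw [Real.div_rpow (Real.rpow_nonneg hba p) hH.le, Real.div_rpow (Real.rpow_nonneg hab q) hH.le,
    Real.rpow_rpow_inv hba hp, Real.rpow_rpow_inv hab hq, mul_comm _ (Real.log H),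
    ← Real.rpow_def_of_pos hH, Real.rpow_neg hH.le, Real.rpow_add hH]
  field_simp

theorem stmt_13_general {Ω : Type*} [MeasurableSpace Ω] (Q : Measure Ω)
    (β₁ β₂ : Ω → ℝ)
    (h₁ : ∀ ω, 0 ≤ β₁ ω) (h₂ : ∀ ω, 0 ≤ β₂ ω)
    (α : ℝ) (hα : α ∈ Set.Ioo (-1:ℝ) 1)
    (H : ℝ) (hH : H = ∫ ω, (β₁ ω) ^ ((1 - α) / 2) * (β₂ ω) ^ ((1 + α) / 2) ∂Q)
    (hHpos : 0 < H)
    (f₁ f₂ : Ω → ℝ)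
    (hf₁ : f₁ = fun ω =>
      (if β₁ ω = 0 ∧ β₂ ω = 0 then 1 else β₂ ω / β₁ ω) ^ ((1 + α) / 2) / H)
    (hf₂ : f₂ = fun ω =>
      (if β₁ ω = 0 ∧ β₂ ω = 0 then 1 else β₁ ω / β₂ ω) ^ ((1 - α) / 2) / H) :
    (∫ ω, f₁ ω * β₁ ω ∂Q) = 1 ∧ (∫ ω, f₂ ω * β₂ ω ∂Q) = 1 ∧
      ∀ ω, 0 < β₁ ω → 0 < β₂ ω →
        (f₁ ω) ^ (2 / (1 + α)) * (f₂ ω) ^ (2 / (1 - α)) =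
          Real.exp ((4 / (α ^ 2 - 1)) * Real.log H) := by
  obtain ⟨hαl, hαr⟩ := hα
  have hp : 0 < (1 + α) / 2 := by linarith
  have hq : 0 < (1 - α) / 2 := by linarith
  have hpq : (1 + α) / 2 + (1 - α) / 2 = 1 := by ring
  have hHellinger : ∫ ω, (β₁ ω) ^ ((1 - α) / 2) * (β₂ ω) ^ ((1 + α) / 2) / H ∂Q = 1 := by
    rw [integral_div, ← hH, div_self hHpos.ne']
  subst hf₁ hf₂
  refine ⟨?_, ?_, fun ω hb₁ hb₂ => ?_⟩
  · simp_rw [div_mul_eq_mul_div, ite_div_rpow_mul_self And.left (h₁ _) (h₂ _) hq hpq]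
    exact hHellinger
  · simp_rw [div_mul_eq_mul_div,
      ite_div_rpow_mul_self And.right (h₂ _) (h₁ _) hp ((add_comm _ _).trans hpq)]
    simpa only [mul_comm] using hHellinger
  · have hne : ¬(β₁ ω = 0 ∧ β₂ ω = 0) := fun h => hb₁.ne' h.1
    have hexp : 4 / (α ^ 2 - 1) = -(((1 + α) / 2)⁻¹ + ((1 - α) / 2)⁻¹) := by
      have : 1 + α ≠ 0 := by linarith
      have : 1 - α ≠ 0 := by linarith
      have : α ^ 2 - 1 ≠ 0 := by nlinarith
      rw [inv_div, inv_div]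
      field_simp
      ring
    simp only [if_neg hne]
    rw [← inv_div (1 + α), ← inv_div (1 - α), hexp]
    exact div_rpow_div_rpow_inv_mul hb₁ hb₂ hp.ne' hq.ne' hHpos

theorem stmt_13 {Ω : Type*} [MeasurableSpace Ω] (Q : Measure Ω) [IsProbabilityMeasure Q]
    (β₁ β₂ : Ω → ℝ) (hm₁ : Measurable β₁) (hm₂ : Measurable β₂)
    (h₁ : ∀ ω, 0 ≤ β₁ ω) (h₂ : ∀ ω, 0 ≤ β₂ ω)
    (hi₁ : ∫ ω, β₁ ω ∂Q = 1) (hi₂ : ∫ ω, β₂ ω ∂Q = 1)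
    (α : ℝ) (hα : α ∈ Set.Ioo (-1:ℝ) 1)
    (hint : Integrable (fun ω => (β₁ ω) ^ ((1 - α) / 2) * (β₂ ω) ^ ((1 + α) / 2)) Q)
    (H : ℝ) (hH : H = ∫ ω, (β₁ ω) ^ ((1 - α) / 2) * (β₂ ω) ^ ((1 + α) / 2) ∂Q)
    (hHpos : 0 < H)
    (f₁ f₂ : Ω → ℝ)
    (hf₁ : f₁ = fun ω =>
      (if β₁ ω = 0 ∧ β₂ ω = 0 then 1 else β₂ ω / β₁ ω) ^ ((1 + α) / 2) / H)
    (hf₂ : f₂ = fun ω =>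
      (if β₁ ω = 0 ∧ β₂ ω = 0 then 1 else β₁ ω / β₂ ω) ^ ((1 - α) / 2) / H) :
    (∫ ω, f₁ ω * β₁ ω ∂Q) = 1 ∧ (∫ ω, f₂ ω * β₂ ω ∂Q) = 1 ∧
      ∀ ω, 0 < β₁ ω → 0 < β₂ ω →
        (f₁ ω) ^ (2 / (1 + α)) * (f₂ ω) ^ (2 / (1 - α)) =
          Real.exp ((4 / (α ^ 2 - 1)) * Real.log H) :=
  stmt_13_general Q β₁ β₂ h₁ h₂ α hα H hH hHpos f₁ f₂ hf₁ hf₂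
end

section
/- Let c > 1 and ε ∈ (0,1). If β¹, β² are positive measurable densities w.r.t. a probability measure Q with ∫β¹dQ = ∫β²dQ = 1 and 1/c ≤ β²/β¹ ≤ c pointwise, then ∫(β²/β¹)^ε β¹ dQ ≤ 1 − ε·D^{(−1)}(P¹∥P²) + (ε²/2)·c^ε·(ln c)², where D^{(−1)}(P¹∥P²) := ∫ ln(β¹/β²)·β¹ dQ is the Kullback–Leibler divergence. -/
/-!
Write the likelihood ratio as `r = exp (log r)` with `|log r| ≤ log c`. The second-order Taylor
bound `e^x ≤ 1 + x + (x²/2) e^{x⁺}` at `x = ε log r` bounds `r^ε` by an affine function of `log r`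
plus the constant `(ε²/2) c^ε (log c)²`; integrating against `β₁ dQ` turns the affine part into
`1 - ε D(P¹‖P²)`.
-/

open MeasureTheory Real Set

theorem Real.exp_le_one_add_add_sq_div_two_mul_exp_max (x : ℝ) :
    exp x ≤ 1 + x + x ^ 2 / 2 * exp (max x 0) := by
  rcases eq_or_ne x 0 with rfl | hx
  · simp
  obtain ⟨ξ, hξ, hTaylor⟩ := taylor_mean_remainder_lagrange_iteratedDeriv (f := exp) (n := 1)
    hx.symm contDiff_exp.contDiffOn
  have hderiv : iteratedDerivWithin 1 exp (uIcc 0 x) 0 = 1 := by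
    rw [iteratedDerivWithin_eq_iteratedDeriv (uniqueDiffOn_uIcc hx.symm) contDiff_exp.contDiffAt
      left_mem_uIcc]
    simp [iteratedDeriv_eq_iterate]
  simp only [taylorWithinEval_succ, taylor_within_zero_eval, hderiv, iteratedDeriv_eq_iterate,
    iter_deriv_exp] at hTaylor
  have hξx : exp ξ ≤ exp (max x 0) := exp_le_exp.2 (max_comm 0 x ▸ hξ.2.le)
  norm_num at hTaylor
  nlinarith [sq_nonneg x]

theorem Real.abs_log_le_log_of_mem_Icc {c r : ℝ} (hc : 0 < c) (hr : r ∈ Icc c⁻¹ c) :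
    |log r| ≤ log c := by
  rw [abs_le, ← log_inv]
  exact ⟨log_le_log (inv_pos.2 hc) hr.1, log_le_log ((inv_pos.2 hc).trans_le hr.1) hr.2⟩

theorem Real.rpow_le_one_add_mul_log_add_of_mem_Icc {c r ε : ℝ} (hc : 0 < c)
    (hr : r ∈ Icc c⁻¹ c) (hε : 0 ≤ ε) :
    r ^ ε ≤ 1 + ε * log r + ε ^ 2 / 2 * c ^ ε * log c ^ 2 := by
  have hlog : |ε * log r| ≤ ε * log c := by
    rw [abs_mul, abs_of_nonneg hε]
    exact mul_le_mul_of_nonneg_left (abs_log_le_log_of_mem_Icc hc hr) hε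
  have hexp : exp (max (ε * log r) 0) ≤ c ^ ε := by
    rw [rpow_def_of_pos hc, mul_comm (log c)]
    exact exp_le_exp.2 (max_le ((le_abs_self _).trans hlog) ((abs_nonneg _).trans hlog))
  have hsq : (ε * log r) ^ 2 ≤ (ε * log c) ^ 2 := sq_le_sq' (abs_le.1 hlog).1 (abs_le.1 hlog).2
  calc r ^ ε = exp (ε * log r) := by
        rw [rpow_def_of_pos ((inv_pos.2 hc).trans_le hr.1), mul_comm (log r)]
    _ ≤ 1 + ε * log r + (ε * log r) ^ 2 / 2 * exp (max (ε * log r) 0) :=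
        exp_le_one_add_add_sq_div_two_mul_exp_max _
    _ ≤ 1 + ε * log r + (ε * log c) ^ 2 / 2 * c ^ ε := by gcongr
    _ = 1 + ε * log r + ε ^ 2 / 2 * c ^ ε * log c ^ 2 := by ring

theorem MeasureTheory.integral_rpow_mul_le_of_mem_Icc {Ω : Type*} [MeasurableSpace Ω]
    {μ : Measure Ω} {r w : Ω → ℝ} {c ε : ℝ} (hc : 0 < c) (hε : 0 ≤ ε) (hr : AEMeasurable r μ)
    (hrc : ∀ᵐ ω ∂μ, r ω ∈ Icc c⁻¹ c) (hw : Integrable w μ) (hw₀ : 0 ≤ᵐ[μ] w) :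
    ∫ ω, r ω ^ ε * w ω ∂μ ≤
      (1 + ε ^ 2 / 2 * c ^ ε * log c ^ 2) * ∫ ω, w ω ∂μ + ε * ∫ ω, log (r ω) * w ω ∂μ := by
  have hlog : Integrable (fun ω ↦ log (r ω) * w ω) μ :=
    hw.bdd_mul hr.log.aestronglyMeasurable <| hrc.mono fun ω h ↦ by
      rw [norm_eq_abs]
      exact abs_log_le_log_of_mem_Icc hc h
  have hrpow : Integrable (fun ω ↦ r ω ^ ε * w ω) μ :=
    hw.bdd_mul (hr.pow_const ε).aestronglyMeasurable <| hrc.mono fun ω h ↦ by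
      rw [norm_eq_abs, abs_of_nonneg (rpow_nonneg ((inv_pos.2 hc).le.trans h.1) ε)]
      exact rpow_le_rpow ((inv_pos.2 hc).le.trans h.1) h.2 hε
  calc ∫ ω, r ω ^ ε * w ω ∂μ
      ≤ ∫ ω, (1 + ε ^ 2 / 2 * c ^ ε * log c ^ 2) * w ω + ε * (log (r ω) * w ω) ∂μ := by
        refine integral_mono_ae hrpow ((hw.const_mul _).add (hlog.const_mul ε)) ?_
        filter_upwards [hrc, hw₀] with ω hω hω₀
        linear_combination
          mul_le_mul_of_nonneg_right (rpow_le_one_add_mul_log_add_of_mem_Icc hc hω hε) hω₀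
    _ = _ := by rw [integral_add (hw.const_mul _) (hlog.const_mul ε), integral_const_mul,
        integral_const_mul]

theorem stmt_14_general {Ω : Type*} [MeasurableSpace Ω] (Q : Measure Ω)
    (β₁ β₂ : Ω → ℝ) (hm₁ : Measurable β₁) (hm₂ : Measurable β₂)
    (h₁ : ∀ ω, 0 < β₁ ω)
    (hi₁ : ∫ ω, β₁ ω ∂Q = 1)
    (c : ℝ) (hc : 1 < c) (ε : ℝ) (hε : ε ∈ Set.Ioo (0:ℝ) 1)
    (htimid : ∀ ω, 1 / c ≤ β₂ ω / β₁ ω ∧ β₂ ω / β₁ ω ≤ c) :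
    (∫ ω, (β₂ ω / β₁ ω) ^ ε * β₁ ω ∂Q) ≤
      1 - ε * (∫ ω, Real.log (β₁ ω / β₂ ω) * β₁ ω ∂Q) +
        (ε ^ 2 / 2) * c ^ ε * (Real.log c) ^ 2 := by
  have hβ₁ : Integrable β₁ Q := .of_integral_ne_zero (by rw [hi₁]; exact one_ne_zero)
  have hbound := integral_rpow_mul_le_of_mem_Icc (r := fun ω ↦ β₂ ω / β₁ ω)
    (zero_lt_one.trans hc) hε.1.le (hm₂.div hm₁).aemeasurable
    (ae_of_all _ fun ω ↦ one_div c ▸ htimid ω) hβ₁ (ae_of_all _ fun ω ↦ (h₁ ω).le)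
  have hKL : ∫ ω, log (β₂ ω / β₁ ω) * β₁ ω ∂Q = -∫ ω, log (β₁ ω / β₂ ω) * β₁ ω ∂Q := by
    rw [← integral_neg]
    congr! 2 with ω
    rw [← inv_div, log_inv, neg_mul]
  rw [hi₁, hKL] at hbound
  linarith

theorem stmt_14 {Ω : Type*} [MeasurableSpace Ω] (Q : Measure Ω) [IsProbabilityMeasure Q]
    (β₁ β₂ : Ω → ℝ) (hm₁ : Measurable β₁) (hm₂ : Measurable β₂)
    (h₁ : ∀ ω, 0 < β₁ ω) (h₂ : ∀ ω, 0 < β₂ ω)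
    (hi₁ : ∫ ω, β₁ ω ∂Q = 1) (hi₂ : ∫ ω, β₂ ω ∂Q = 1)
    (c : ℝ) (hc : 1 < c) (ε : ℝ) (hε : ε ∈ Set.Ioo (0:ℝ) 1)
    (htimid : ∀ ω, 1 / c ≤ β₂ ω / β₁ ω ∧ β₂ ω / β₁ ω ≤ c) :
    (∫ ω, (β₂ ω / β₁ ω) ^ ε * β₁ ω ∂Q) ≤
      1 - ε * (∫ ω, Real.log (β₁ ω / β₂ ω) * β₁ ω ∂Q) +
        (ε ^ 2 / 2) * c ^ ε * (Real.log c) ^ 2 :=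
  stmt_14_general Q β₁ β₂ hm₁ hm₂ h₁ hi₁ c hc ε hε htimid
end

section
/- Let c > 1 and ε ∈ (0,1). If β¹, β² are positive measurable densities w.r.t. a probability measure Q with ∫β¹dQ = ∫β²dQ = 1 and 1/c ≤ β²/β¹ ≤ c pointwise, then (−1/ε)·ln ∫(β²/β¹)^ε β¹ dQ ≥ D^{(−1)}(P¹∥P²) − (ε/2)·c^ε·(ln c)², where D^{(−1)}(P¹∥P²) := ∫ ln(β¹/β²)·β¹ dQ. -/
/-! With `t = β₂ / β₁` and `u = ε log t`, timidity gives `|u| ≤ ε log c`, so the second-order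
bound `exp u ≤ 1 + u + u² / 2 · exp |u|` yields `t ^ ε ≤ 1 + ε log t + ε² / 2 · c ^ ε · log² c`
pointwise. Integrating against `β₁ dQ` bounds `I = ∫ t ^ ε β₁ dQ` by
`1 - ε D + ε² / 2 · c ^ ε · log² c`, and `log I ≤ I - 1` (as `I > 0`) gives the claim after
dividing by `-ε`. -/

open Set

namespace Real

theorem exp_le_one_add_add_sq_div_two_of_nonpos {x : ℝ} (hx : x ≤ 0) :
    exp x ≤ 1 + x + x ^ 2 / 2 := by
  have hanti : AntitoneOn (fun y ↦ 1 + y + y ^ 2 / 2 - exp y) (Iic 0) := by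
    refine antitoneOn_of_hasDerivWithinAt_nonpos (convex_Iic 0) (by fun_prop)
      (fun y _ ↦ ?_) (fun y _ ↦ ?_) (f' := fun y ↦ 1 + y - exp y)
    · refine HasDerivAt.hasDerivWithinAt ?_
      exact ((((hasDerivAt_id y).const_add 1).add ((hasDerivAt_pow 2 y).div_const 2)).sub
        (hasDerivAt_exp y)).congr_deriv (by norm_num)
    · linarith [add_one_le_exp y]
  simpa using hanti hx (mem_Iic.2 le_rfl) hx

theorem exp_le_one_add_add_sq_div_two_mul_exp_of_nonneg {x : ℝ} (hx : 0 ≤ x) :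
    exp x ≤ 1 + x + x ^ 2 / 2 * exp x := by
  have hmono : MonotoneOn (fun y ↦ 1 + y + y ^ 2 / 2 * exp y - exp y) (Ici 0) := by
    refine monotoneOn_of_hasDerivWithinAt_nonneg (convex_Ici 0) (by fun_prop)
      (fun y _ ↦ ?_) (fun y _ ↦ ?_) (f' := fun y ↦ 1 - (1 - y - y ^ 2 / 2) * exp y)
    · refine HasDerivAt.hasDerivWithinAt ?_
      exact ((((hasDerivAt_id y).const_add 1).add
        (((hasDerivAt_pow 2 y).div_const 2).mul (hasDerivAt_exp y))).sub
        (hasDerivAt_exp y)).congr_deriv (by norm_num; ring)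
    · -- `exp (-y) ≥ 1 - y` rearranges to `(1 - y) exp y ≤ 1`.
      have h := mul_le_mul_of_nonneg_right (add_one_le_exp (-y)) (exp_pos y).le
      rw [← exp_add, neg_add_cancel, exp_zero] at h
      nlinarith [exp_pos y, sq_nonneg y]
  simpa using hmono (mem_Ici.2 le_rfl) hx hx

theorem exp_le_one_add_add_sq_div_two_mul_exp_abs (x : ℝ) :
    exp x ≤ 1 + x + x ^ 2 / 2 * exp |x| := by
  rcases le_total x 0 with hx | hx
  · have := one_le_exp (abs_nonneg x)
    nlinarith [exp_le_one_add_add_sq_div_two_of_nonpos hx, sq_nonneg x]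
  · simpa [abs_of_nonneg hx] using exp_le_one_add_add_sq_div_two_mul_exp_of_nonneg hx

theorem abs_log_le_log_of_one_div_le_of_le {t c : ℝ} (hc : 0 < c) (hlo : 1 / c ≤ t)
    (hhi : t ≤ c) : |log t| ≤ log c := by
  have ht : 0 < t := (one_div_pos.2 hc).trans_le hlo
  refine abs_le.2 ⟨?_, log_le_log ht hhi⟩
  simpa [log_inv] using log_le_log (one_div_pos.2 hc) hlo

theorem rpow_le_one_add_mul_log_add {t c ε : ℝ} (ht : 0 < t) (hc : 0 < c)
    (htc : |log t| ≤ log c) (hε : 0 ≤ ε) :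
    t ^ ε ≤ 1 + ε * log t + ε ^ 2 / 2 * c ^ ε * log c ^ 2 := by
  have habs : |ε * log t| ≤ ε * log c := by
    rw [abs_mul, abs_of_nonneg hε]; gcongr
  calc t ^ ε = exp (ε * log t) := by rw [rpow_def_of_pos ht, mul_comm]
    _ ≤ 1 + ε * log t + (ε * log t) ^ 2 / 2 * exp |ε * log t| :=
      exp_le_one_add_add_sq_div_two_mul_exp_abs _
    _ ≤ 1 + ε * log t + (ε * log c) ^ 2 / 2 * exp (ε * log c) := by
      gcongr 1 + ε * log t + ?_ / 2 * exp ?_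
      exact sq_le_sq' (neg_le_of_abs_le habs) (le_of_abs_le habs)
    _ = 1 + ε * log t + ε ^ 2 / 2 * c ^ ε * log c ^ 2 := by
      rw [rpow_def_of_pos hc, mul_comm (log c)]; ring

end Real

namespace MeasureTheory

variable {Ω : Type*} [MeasurableSpace Ω] {μ : Measure Ω}

theorem integral_pos_of_forall_pos [NeZero μ] {f : Ω → ℝ} (hf : Integrable f μ)
    (hpos : ∀ ω, 0 < f ω) : 0 < ∫ ω, f ω ∂μ := by
  refine (integral_pos_iff_support_of_nonneg (fun ω ↦ (hpos ω).le) hf).2 ?_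
  rw [Function.support_eq_univ fun ω ↦ (hpos ω).ne']
  exact Measure.measure_univ_pos.2 (NeZero.ne μ)

section LikelihoodRatio

variable {β₁ β₂ : Ω → ℝ} {c ε : ℝ}

theorem integrable_rpow_div_mul (hβ₁ : Integrable β₁ μ) (hm₁ : Measurable β₁)
    (hm₂ : Measurable β₂) (h₁ : ∀ ω, 0 < β₁ ω) (h₂ : ∀ ω, 0 < β₂ ω) (hε : 0 ≤ ε)
    (hle : ∀ ω, β₂ ω / β₁ ω ≤ c) :
    Integrable (fun ω ↦ (β₂ ω / β₁ ω) ^ ε * β₁ ω) μ := by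
  refine hβ₁.bdd_mul ((hm₂.div hm₁).pow_const ε).aestronglyMeasurable
    (Filter.Eventually.of_forall fun ω ↦ ?_) (c := c ^ ε)
  have hpos := div_pos (h₂ ω) (h₁ ω)
  rw [Real.norm_of_nonneg (Real.rpow_nonneg hpos.le ε)]
  exact Real.rpow_le_rpow hpos.le (hle ω) hε

theorem integrable_log_div_mul (hβ₁ : Integrable β₁ μ) (hm₁ : Measurable β₁)
    (hm₂ : Measurable β₂) (hlog : ∀ ω, |Real.log (β₁ ω / β₂ ω)| ≤ Real.log c) :
    Integrable (fun ω ↦ Real.log (β₁ ω / β₂ ω) * β₁ ω) μ :=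
  hβ₁.bdd_mul (hm₁.div hm₂).log.aestronglyMeasurable (Filter.Eventually.of_forall hlog)

theorem integral_rpow_div_mul_le (hβ₁ : Integrable β₁ μ) (hm₁ : Measurable β₁)
    (hm₂ : Measurable β₂) (h₁ : ∀ ω, 0 < β₁ ω) (h₂ : ∀ ω, 0 < β₂ ω) (hc : 0 < c)
    (hε : 0 ≤ ε) (htimid : ∀ ω, 1 / c ≤ β₂ ω / β₁ ω ∧ β₂ ω / β₁ ω ≤ c) :
    ∫ ω, (β₂ ω / β₁ ω) ^ ε * β₁ ω ∂μ ≤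
      (1 + ε ^ 2 / 2 * c ^ ε * Real.log c ^ 2) * ∫ ω, β₁ ω ∂μ -
        ε * ∫ ω, Real.log (β₁ ω / β₂ ω) * β₁ ω ∂μ := by
  have hlog (ω : Ω) : |Real.log (β₂ ω / β₁ ω)| ≤ Real.log c :=
    Real.abs_log_le_log_of_one_div_le_of_le hc (htimid ω).1 (htimid ω).2
  have hrev (ω : Ω) : Real.log (β₁ ω / β₂ ω) = -Real.log (β₂ ω / β₁ ω) := by
    rw [← Real.log_inv, inv_div]
  have hlog' (ω : Ω) : |Real.log (β₁ ω / β₂ ω)| ≤ Real.log c := by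
    rw [hrev, abs_neg]; exact hlog ω
  have hint := integrable_log_div_mul hβ₁ hm₁ hm₂ hlog'
  rw [← integral_const_mul, ← integral_const_mul, ← integral_sub (hβ₁.const_mul _)
    (hint.const_mul _)]
  refine integral_mono (integrable_rpow_div_mul hβ₁ hm₁ hm₂ h₁ h₂ hε fun ω ↦ (htimid ω).2)
    ((hβ₁.const_mul _).sub (hint.const_mul _)) fun ω ↦ ?_
  have hpt := mul_le_mul_of_nonneg_right
    (Real.rpow_le_one_add_mul_log_add (div_pos (h₂ ω) (h₁ ω)) hc (hlog ω) hε) (h₁ ω).le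
  rw [hrev]
  linarith

end LikelihoodRatio

end MeasureTheory

open MeasureTheory

theorem stmt_15_general {Ω : Type*} [MeasurableSpace Ω] (Q : Measure Ω) [IsProbabilityMeasure Q]
    (β₁ β₂ : Ω → ℝ) (hm₁ : Measurable β₁) (hm₂ : Measurable β₂)
    (h₁ : ∀ ω, 0 < β₁ ω) (h₂ : ∀ ω, 0 < β₂ ω)
    (hi₁ : ∫ ω, β₁ ω ∂Q = 1)
    (c : ℝ) (hc : 1 < c) (ε : ℝ) (hε : ε ∈ Set.Ioo (0:ℝ) 1)
    (htimid : ∀ ω, 1 / c ≤ β₂ ω / β₁ ω ∧ β₂ ω / β₁ ω ≤ c) :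
    (-1 / ε) * Real.log (∫ ω, (β₂ ω / β₁ ω) ^ ε * β₁ ω ∂Q) ≥
      (∫ ω, Real.log (β₁ ω / β₂ ω) * β₁ ω ∂Q) -
        (ε / 2) * c ^ ε * (Real.log c) ^ 2 := by
  have hε₀ : 0 < ε := hε.1
  have hc₀ : 0 < c := one_pos.trans hc
  have hβ₁ : Integrable β₁ Q := Integrable.of_integral_ne_zero (by rw [hi₁]; exact one_ne_zero)
  have hI : 0 < ∫ ω, (β₂ ω / β₁ ω) ^ ε * β₁ ω ∂Q :=
    integral_pos_of_forall_pos
      (integrable_rpow_div_mul hβ₁ hm₁ hm₂ h₁ h₂ hε₀.le fun ω ↦ (htimid ω).2)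
      fun ω ↦ mul_pos (Real.rpow_pos_of_pos (div_pos (h₂ ω) (h₁ ω)) ε) (h₁ ω)
  have hle := integral_rpow_div_mul_le hβ₁ hm₁ hm₂ h₁ h₂ hc₀ hε₀.le htimid
  rw [hi₁] at hle
  have hlog := Real.log_le_sub_one_of_pos hI
  rw [ge_iff_le, show -1 / ε * Real.log _ = -Real.log _ / ε by ring, le_div_iff₀ hε₀]
  linarith

theorem stmt_15 {Ω : Type*} [MeasurableSpace Ω] (Q : Measure Ω) [IsProbabilityMeasure Q]
    (β₁ β₂ : Ω → ℝ) (hm₁ : Measurable β₁) (hm₂ : Measurable β₂)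
    (h₁ : ∀ ω, 0 < β₁ ω) (h₂ : ∀ ω, 0 < β₂ ω)
    (hi₁ : ∫ ω, β₁ ω ∂Q = 1) (hi₂ : ∫ ω, β₂ ω ∂Q = 1)
    (c : ℝ) (hc : 1 < c) (ε : ℝ) (hε : ε ∈ Set.Ioo (0:ℝ) 1)
    (htimid : ∀ ω, 1 / c ≤ β₂ ω / β₁ ω ∧ β₂ ω / β₁ ω ≤ c) :
    (-1 / ε) * Real.log (∫ ω, (β₂ ω / β₁ ω) ^ ε * β₁ ω ∂Q) ≥
      (∫ ω, Real.log (β₁ ω / β₂ ω) * β₁ ω ∂Q) -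
        (ε / 2) * c ^ ε * (Real.log c) ^ 2 :=
  stmt_15_general Q β₁ β₂ hm₁ hm₂ h₁ h₂ hi₁ c hc ε hε htimid
end

section
/- Let Q be a probability measure and β¹, β² positive measurable densities with ∫β¹dQ = ∫β²dQ = 1 and 1/c ≤ β¹/β² ≤ c pointwise for some c > 1. Then for every ε ∈ (0,1), (1/ε)·ln ∫(β¹/β²)^ε β¹ dQ ≤ D^{(−1)}(P¹∥P²) + (ε/2)·c^ε·(ln c)², where D^{(−1)}(P¹∥P²) := ∫ ln(β¹/β²)·β¹ dQ. -/
/-!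
With `f = ε log (β¹/β²)` the timidity bound gives `|f| ≤ ε log c`, so pointwise
`e^f ≤ 1 + f + (ε log c)² c^ε / 2`. Integrating against `β¹ dQ`, which has unit mass, and using
`log y ≤ y - 1` yields `log ∫ e^f β¹ dQ ≤ ε D + ε² (log c)² c^ε / 2`; divide by `ε`.
-/

open MeasureTheory Real Set

theorem Real.exp_le_one_add_add_sq_div_two_mul_exp {x M : ℝ} (hM : 0 ≤ M) (hxM : x ≤ M) :
    exp x ≤ 1 + x + x ^ 2 / 2 * exp M := by
  -- `g' t = 1 + t exp M - exp t` is `≤ 0` for `t ≤ 0` (as `t exp M ≤ t ≤ exp t - 1`) and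
  -- `≥ 0` on `[0, M]` (as `exp t - 1 ≤ t exp t ≤ t exp M`), and `g 0 = 0`.
  set g : ℝ → ℝ := fun t ↦ 1 + t + t ^ 2 / 2 * exp M - exp t
  have hg : ∀ t, HasDerivAt g (1 + t * exp M - exp t) t := fun t ↦ by
    have h := ((((hasDerivAt_id' t).const_add 1).add
      (((hasDerivAt_pow 2 t).div_const 2).mul_const (exp M))).sub (hasDerivAt_exp t))
    exact h.congr_deriv (by norm_num)
  have hg0 : g 0 = 0 := by simp [g]
  suffices 0 ≤ g x by simp only [g] at this; linarith
  have hg_cont : Continuous g := by fun_prop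
  rcases le_total x 0 with hx | hx
  · have hanti : AntitoneOn g (Iic 0) :=
      antitoneOn_of_hasDerivWithinAt_nonpos (convex_Iic 0) hg_cont.continuousOn
        (fun t _ ↦ (hg t).hasDerivWithinAt) fun t ht ↦ by
          rw [interior_Iic, mem_Iio] at ht
          nlinarith [add_one_le_exp t, one_le_exp hM]
    simpa [hg0] using hanti hx (mem_Iic.mpr le_rfl) hx
  · have hmono : MonotoneOn g (Icc 0 x) :=
      monotoneOn_of_hasDerivWithinAt_nonneg (convex_Icc 0 x) hg_cont.continuousOn
        (fun t _ ↦ (hg t).hasDerivWithinAt) fun t ht ↦ by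
          rw [interior_Icc] at ht
          have hexp : (1 - t) * exp t ≤ 1 := by
            calc (1 - t) * exp t ≤ exp (-t) * exp t := by
                  gcongr; linarith [add_one_le_exp (-t)]
              _ = 1 := by rw [← exp_add, neg_add_cancel, exp_zero]
          nlinarith [exp_le_exp.mpr (ht.2.le.trans hxM), ht.1]
    simpa [hg0] using hmono (left_mem_Icc.mpr hx) (right_mem_Icc.mpr hx) hx

theorem Real.abs_log_le_log_of_inv_le_of_le {x c : ℝ} (hc : 0 < c) (hcx : c⁻¹ ≤ x)
    (hxc : x ≤ c) : |log x| ≤ log c := by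
  have hx : 0 < x := (inv_pos.mpr hc).trans_le hcx
  rw [abs_le]
  constructor
  · simpa [log_inv] using log_le_log (inv_pos.mpr hc) hcx
  · exact log_le_log hx hxc

section WeightedIntegral

variable {Ω : Type*} [MeasurableSpace Ω] {μ : Measure Ω} {w f : Ω → ℝ} {L : ℝ}

theorem MeasureTheory.Integrable.exp_mul (hw : Integrable w μ) (hf : AEStronglyMeasurable f μ)
    (hfL : ∀ ω, f ω ≤ L) : Integrable (fun ω ↦ exp (f ω) * w ω) μ :=
  hw.bdd_mul (continuous_exp.comp_aestronglyMeasurable hf) (c := exp L) <| .of_forall fun ω ↦ by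
    rw [norm_of_nonneg (exp_pos _).le]
    exact exp_le_exp.mpr (hfL ω)

theorem integral_exp_mul_le_one_add_integral_mul_add (hw : ∀ ω, 0 ≤ w ω)
    (hw₁ : ∫ ω, w ω ∂μ = 1) (hf : AEStronglyMeasurable f μ) (hfL : ∀ ω, |f ω| ≤ L) :
    ∫ ω, exp (f ω) * w ω ∂μ ≤ 1 + ∫ ω, f ω * w ω ∂μ + L ^ 2 / 2 * exp L := by
  have hw_int : Integrable w μ := integrable_of_integral_eq_one hw₁
  have hfw_int : Integrable (fun ω ↦ f ω * w ω) μ :=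
    hw_int.bdd_mul hf (.of_forall hfL)
  have hexp_int := hw_int.exp_mul hf fun ω ↦ le_of_abs_le (hfL ω)
  have hpoint : ∀ ω, exp (f ω) ≤ 1 + f ω + L ^ 2 / 2 * exp L := fun ω ↦ by
    have hL : 0 ≤ L := (abs_nonneg _).trans (hfL ω)
    have hsq : f ω ^ 2 ≤ L ^ 2 := sq_le_sq' (abs_le.mp (hfL ω)).1 (abs_le.mp (hfL ω)).2
    calc exp (f ω) ≤ 1 + f ω + f ω ^ 2 / 2 * exp L :=
          exp_le_one_add_add_sq_div_two_mul_exp hL (le_of_abs_le (hfL ω))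
      _ ≤ 1 + f ω + L ^ 2 / 2 * exp L := by gcongr
  have hlin_int : Integrable (fun ω ↦ w ω + f ω * w ω) μ := hw_int.add hfw_int
  calc ∫ ω, exp (f ω) * w ω ∂μ
      ≤ ∫ ω, w ω + f ω * w ω + L ^ 2 / 2 * exp L * w ω ∂μ :=
        integral_mono hexp_int (hlin_int.add (hw_int.const_mul _)) fun ω ↦ by
          nlinarith [hpoint ω, hw ω]
    _ = 1 + ∫ ω, f ω * w ω ∂μ + L ^ 2 / 2 * exp L := by
        rw [integral_add hlin_int (hw_int.const_mul _), integral_add hw_int hfw_int,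
          integral_const_mul, hw₁, mul_one]

theorem log_integral_exp_mul_le_integral_mul_add (hw : ∀ ω, 0 ≤ w ω)
    (hw₁ : ∫ ω, w ω ∂μ = 1) (hf : AEStronglyMeasurable f μ) (hfL : ∀ ω, |f ω| ≤ L) :
    log (∫ ω, exp (f ω) * w ω ∂μ) ≤ ∫ ω, f ω * w ω ∂μ + L ^ 2 / 2 * exp L := by
  have hw_int : Integrable w μ := integrable_of_integral_eq_one hw₁
  have hpos : 0 < ∫ ω, exp (f ω) * w ω ∂μ :=
    calc 0 < exp (-L) := exp_pos _
      _ = ∫ ω, exp (-L) * w ω ∂μ := by rw [integral_const_mul, hw₁, mul_one]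
      _ ≤ ∫ ω, exp (f ω) * w ω ∂μ :=
        integral_mono (hw_int.const_mul _) (hw_int.exp_mul hf fun ω ↦ le_of_abs_le (hfL ω))
          fun ω ↦ by gcongr; exacts [hw ω, neg_le_of_abs_le (hfL ω)]
  linarith [log_le_sub_one_of_pos hpos, integral_exp_mul_le_one_add_integral_mul_add hw hw₁ hf hfL]

end WeightedIntegral

theorem stmt_16_general {Ω : Type*} [MeasurableSpace Ω] (Q : Measure Ω)
    (β₁ β₂ : Ω → ℝ) (hm₁ : Measurable β₁) (hm₂ : Measurable β₂)
    (h₁ : ∀ ω, 0 < β₁ ω)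
    (hi₁ : ∫ ω, β₁ ω ∂Q = 1)
    (c : ℝ) (hc : 1 < c)
    (htimid : ∀ ω, 1 / c ≤ β₁ ω / β₂ ω ∧ β₁ ω / β₂ ω ≤ c)
    (ε : ℝ) (hε : ε ∈ Set.Ioo (0:ℝ) 1) :
    (1 / ε) * Real.log (∫ ω, (β₁ ω / β₂ ω) ^ ε * β₁ ω ∂Q) ≤
      (∫ ω, Real.log (β₁ ω / β₂ ω) * β₁ ω ∂Q) +
        (ε / 2) * c ^ ε * (Real.log c) ^ 2 := by
  have hε₀ : 0 < ε := hε.1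
  have hc₀ : 0 < c := zero_lt_one.trans hc
  have hratio_pos : ∀ ω, 0 < β₁ ω / β₂ ω := fun ω ↦
    (one_div_pos.mpr hc₀).trans_le (htimid ω).1
  have hlog_bound : ∀ ω, |log (β₁ ω / β₂ ω) * ε| ≤ log c * ε := fun ω ↦ by
    rw [abs_mul, abs_of_pos hε₀]
    gcongr
    exact abs_log_le_log_of_inv_le_of_le hc₀ (one_div c ▸ (htimid ω).1) (htimid ω).2
  have key := log_integral_exp_mul_le_integral_mul_add
    (f := fun ω ↦ log (β₁ ω / β₂ ω) * ε) (fun ω ↦ (h₁ ω).le) hi₁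
    ((hm₁.div hm₂).log.mul_const ε).aestronglyMeasurable hlog_bound
  have hD : ∫ ω, log (β₁ ω / β₂ ω) * ε * β₁ ω ∂Q = (∫ ω, log (β₁ ω / β₂ ω) * β₁ ω ∂Q) * ε := by
    simp_rw [mul_right_comm _ ε]
    exact integral_mul_const ε _
  have hrpow : ∀ ω, exp (log (β₁ ω / β₂ ω) * ε) = (β₁ ω / β₂ ω) ^ ε := fun ω ↦
    (rpow_def_of_pos (hratio_pos ω) ε).symm
  simp_rw [hrpow, ← rpow_def_of_pos hc₀, hD] at key
  rw [one_div, inv_mul_le_iff₀ hε₀]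
  exact key.trans_eq (by ring)

theorem stmt_16 {Ω : Type*} [MeasurableSpace Ω] (Q : Measure Ω) [IsProbabilityMeasure Q]
    (β₁ β₂ : Ω → ℝ) (hm₁ : Measurable β₁) (hm₂ : Measurable β₂)
    (h₁ : ∀ ω, 0 < β₁ ω) (h₂ : ∀ ω, 0 < β₂ ω)
    (hi₁ : ∫ ω, β₁ ω ∂Q = 1) (hi₂ : ∫ ω, β₂ ω ∂Q = 1)
    (c : ℝ) (hc : 1 < c)
    (htimid : ∀ ω, 1 / c ≤ β₁ ω / β₂ ω ∧ β₁ ω / β₂ ω ≤ c)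
    (ε : ℝ) (hε : ε ∈ Set.Ioo (0:ℝ) 1) :
    (1 / ε) * Real.log (∫ ω, (β₁ ω / β₂ ω) ^ ε * β₁ ω ∂Q) ≤
      (∫ ω, Real.log (β₁ ω / β₂ ω) * β₁ ω ∂Q) +
        (ε / 2) * c ^ ε * (Real.log c) ^ 2 :=
  stmt_16_general Q β₁ β₂ hm₁ hm₂ h₁ hi₁ c hc htimid ε hε
end
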